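/- arXiv:1103.2427 — 2 statements merged into one kernel-verified Lean document; each statement's English description precedes it below -/
import Mathlib

section
/- For every c ≥ 3 and odd k ≥ 3 with c ≡ 0 (mod 4), the set S = {v_{4i} : 0 ≤ i ≤ ck/4 − 1} ∪ {u_{4i+2} : 0 ≤ i ≤ ck/4 − 1} is a dominating set of P(ck, k) of size ck/2; consequently γ(P(ck,k)) ≤ ck/2. -/
open SimpleGraph

/-- The generalized Petersen graph P(n,k): outer vertices `Sum.inl i`,
inner vertices `Sum.inr i`, indices in `ZMod n`. -/
def petersen (n k : ℕ) : SimpleGraph (ZMod n ⊕ ZMod n) :=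
  SimpleGraph.fromRel (fun a b =>
    match a, b with
    | Sum.inl i, Sum.inl j => j = i + 1
    | Sum.inl i, Sum.inr j => j = i
    | Sum.inr i, Sum.inr j => j = i + (k : ZMod n)
    | _, _ => False)

/-- S is a dominating set: N[S] = V. -/
def IsDominating {V : Type*} (G : SimpleGraph V) (S : Set V) : Prop :=
  ∀ v, v ∈ S ∨ ∃ u ∈ S, G.Adj u v

/-- The domination number: minimum cardinality of a (finite) dominating set. -/
noncomputable def gamma {V : Type*} (G : SimpleGraph V) : ℕ :=
  sInf {m | ∃ S : Finset V, IsDominating G ↑S ∧ S.card = m}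

/-! With `4 ∣ n`, reduce indices to `ZMod 4`: the set consists of the outer vertices of residue 0
and the inner vertices of residue 2, `n / 4` of each. An outer vertex of residue 1, 2 or 3 is
dominated by the outer vertex before it, its inner partner or the outer vertex after it; an inner
vertex of residue 0 by its outer partner; an inner vertex `u_x` of odd residue by `u_{x+k}` or
`u_{x-k}`, one of which has residue 2 because `k` is odd. -/

open Sum

section Adjacency

variable {n k : ℕ} {x y : ZMod n}

theorem petersen_adj_inl_inl :
    (petersen n k).Adj (inl x) (inl y) ↔ x ≠ y ∧ (y = x + 1 ∨ x = y + 1) := by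
  simp [petersen]

theorem petersen_adj_inl_inr : (petersen n k).Adj (inl x) (inr y) ↔ x = y := by
  simp [petersen, eq_comm]

theorem petersen_adj_inr_inr :
    (petersen n k).Adj (inr x) (inr y) ↔ x ≠ y ∧ (y = x + k ∨ x = y + k) := by
  simp [petersen]

end Adjacency

theorem gamma_le_card {V : Type*} {G : SimpleGraph V} {S : Finset V}
    (hS : IsDominating G S) : gamma G ≤ S.card :=
  Nat.sInf_le ⟨S, hS, rfl⟩

def petersenDomSet (n : ℕ) : Finset (ZMod n ⊕ ZMod n) :=
  ((Finset.range (n / 4)).image fun i => inl ((4 * i : ℕ) : ZMod n)) ∪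
    ((Finset.range (n / 4)).image fun i => inr ((4 * i + 2 : ℕ) : ZMod n))

theorem card_petersenDomSet {n : ℕ} (h4 : 4 ∣ n) : (petersenDomSet n).card = n / 2 := by
  have hdisj : Disjoint ((Finset.range (n / 4)).image fun i => inl ((4 * i : ℕ) : ZMod n))
      ((Finset.range (n / 4)).image fun i => inr ((4 * i + 2 : ℕ) : ZMod n)) := by
    simp [Finset.disjoint_left]
  rw [petersenDomSet, Finset.card_union_of_disjoint hdisj, Finset.card_image_of_injOn,
    Finset.card_image_of_injOn, Finset.card_range]
  · omega
  all_goals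
    intro i hi j hj hij
    simp only [Finset.coe_range, Set.mem_Iio, inl.injEq, inr.injEq] at hi hj hij
    have := congrArg ZMod.val hij
    rw [ZMod.val_natCast_of_lt (by omega), ZMod.val_natCast_of_lt (by omega)] at this
    omega

section Residues

variable {n : ℕ} [NeZero n]

theorem inl_mem_petersenDomSet_iff (h4 : 4 ∣ n) (x : ZMod n) :
    inl x ∈ petersenDomSet n ↔ ZMod.castHom h4 (ZMod 4) x = 0 := by
  have hx := ZMod.val_lt x
  rw [ZMod.castHom_apply, ZMod.cast_eq_val, ZMod.natCast_eq_zero_iff]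
  simp only [petersenDomSet, Finset.mem_union, Finset.mem_image, Finset.mem_range, inl.injEq,
    reduceCtorEq, and_false, exists_false, or_false]
  constructor
  · rintro ⟨i, hi, rfl⟩
    rw [ZMod.val_natCast_of_lt (show 4 * i < n by omega)]
    exact Nat.dvd_mul_right 4 i
  · rintro ⟨i, hi⟩
    exact ⟨i, by omega, by rw [← hi, ZMod.natCast_zmod_val]⟩

theorem inr_mem_petersenDomSet_iff (h4 : 4 ∣ n) (x : ZMod n) :
    inr x ∈ petersenDomSet n ↔ ZMod.castHom h4 (ZMod 4) x = 2 := by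
  have hx := ZMod.val_lt x
  rw [ZMod.castHom_apply, ZMod.cast_eq_val, show (2 : ZMod 4) = ((2 : ℕ) : ZMod 4) from rfl,
    ZMod.natCast_eq_natCast_iff']
  simp only [petersenDomSet, Finset.mem_union, Finset.mem_image, Finset.mem_range, inr.injEq,
    reduceCtorEq, and_false, exists_false, false_or]
  constructor
  · rintro ⟨i, hi, rfl⟩
    rw [ZMod.val_natCast_of_lt (show 4 * i + 2 < n by omega)]
    omega
  · intro h2
    exact ⟨x.val / 4, by omega, by rw [show 4 * (x.val / 4) + 2 = x.val by omega,
      ZMod.natCast_zmod_val]⟩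

theorem petersenDomSet_dominates_inl (h4 : 4 ∣ n) (k : ℕ) (x : ZMod n) :
    inl x ∈ petersenDomSet n ∨ ∃ u ∈ petersenDomSet n, (petersen n k).Adj u (inl x) := by
  set φ := ZMod.castHom h4 (ZMod 4)
  obtain h | h | h | h : φ x = 0 ∨ φ x = 1 ∨ φ x = 2 ∨ φ x = 3 := by
    generalize φ x = r; revert r; decide
  · exact .inl ((inl_mem_petersenDomSet_iff h4 x).2 h)
  · have hy : φ (x - 1) = 0 := by rw [map_sub, map_one, h]; decide
    refine .inr ⟨inl (x - 1), (inl_mem_petersenDomSet_iff h4 _).2 hy, ?_⟩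
    exact petersen_adj_inl_inl.2
      ⟨ne_of_apply_ne φ (by rw [hy, h]; decide), .inl (sub_add_cancel x 1).symm⟩
  · exact .inr ⟨inr x, (inr_mem_petersenDomSet_iff h4 x).2 h, (petersen_adj_inl_inr.2 rfl).symm⟩
  · have hy : φ (x + 1) = 0 := by rw [map_add, map_one, h]; decide
    refine .inr ⟨inl (x + 1), (inl_mem_petersenDomSet_iff h4 _).2 hy, ?_⟩
    exact petersen_adj_inl_inl.2 ⟨ne_of_apply_ne φ (by rw [hy, h]; decide), .inr rfl⟩

theorem petersenDomSet_dominates_inr (h4 : 4 ∣ n) {k : ℕ} (hk : Odd k) (x : ZMod n) :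
    inr x ∈ petersenDomSet n ∨ ∃ u ∈ petersenDomSet n, (petersen n k).Adj u (inr x) := by
  set φ := ZMod.castHom h4 (ZMod 4)
  obtain h | h | hodd : φ x = 0 ∨ φ x = 2 ∨ (φ x = 1 ∨ φ x = 3) := by
    generalize φ x = r; revert r; decide
  · exact .inr ⟨inl x, (inl_mem_petersenDomSet_iff h4 x).2 h, petersen_adj_inl_inr.2 rfl⟩
  · exact .inl ((inr_mem_petersenDomSet_iff h4 x).2 h)
  have hk4 : φ k = 1 ∨ φ k = 3 := by
    rw [map_natCast, ← ZMod.natCast_mod]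
    rcases Nat.odd_mod_four_iff.mp (Nat.odd_iff.mp hk) with h | h <;> simp [h]
  have hx2 : φ x ≠ 2 := by rcases hodd with h | h <;> rw [h] <;> decide
  obtain h | h : φ x + φ k = 2 ∨ φ x - φ k = 2 := by
    generalize φ x = r at hodd; generalize φ k = s at hk4; revert r s; decide
  · have hy : φ (x + k) = 2 := by rw [map_add, h]
    refine .inr ⟨inr (x + k), (inr_mem_petersenDomSet_iff h4 _).2 hy, ?_⟩
    exact petersen_adj_inr_inr.2 ⟨ne_of_apply_ne φ (hy ▸ hx2.symm), .inr rfl⟩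
  · have hy : φ (x - k) = 2 := by rw [map_sub, h]
    refine .inr ⟨inr (x - k), (inr_mem_petersenDomSet_iff h4 _).2 hy, ?_⟩
    exact petersen_adj_inr_inr.2
      ⟨ne_of_apply_ne φ (hy ▸ hx2.symm), .inl (sub_add_cancel x k).symm⟩

theorem isDominating_petersenDomSet (h4 : 4 ∣ n) {k : ℕ} (hk : Odd k) :
    IsDominating (petersen n k) (petersenDomSet n) := by
  rintro (x | x)
  · exact_mod_cast petersenDomSet_dominates_inl h4 k x
  · exact_mod_cast petersenDomSet_dominates_inr h4 hk x

end Residues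

theorem petersen_upper_c0mod4_general (c k : ℕ) (hc : 3 ≤ c) (hkodd : k % 2 = 1)
    (hc4 : c % 4 = 0) :
    IsDominating (petersen (c * k) k)
      ↑(((Finset.range (c * k / 4)).image fun i =>
          (Sum.inl ((4 * i : ℕ) : ZMod (c * k)) : ZMod (c * k) ⊕ ZMod (c * k))) ∪
        ((Finset.range (c * k / 4)).image fun i =>
          (Sum.inr ((4 * i + 2 : ℕ) : ZMod (c * k)) : ZMod (c * k) ⊕ ZMod (c * k)))) ∧
    (((Finset.range (c * k / 4)).image fun i =>
          (Sum.inl ((4 * i : ℕ) : ZMod (c * k)) : ZMod (c * k) ⊕ ZMod (c * k))) ∪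
        ((Finset.range (c * k / 4)).image fun i =>
          (Sum.inr ((4 * i + 2 : ℕ) : ZMod (c * k)) : ZMod (c * k) ⊕ ZMod (c * k)))).card
      = c * k / 2 ∧
    gamma (petersen (c * k) k) ≤ c * k / 2 := by
  have h4 : 4 ∣ c * k := Dvd.dvd.mul_right (Nat.dvd_of_mod_eq_zero hc4) k
  have : NeZero (c * k) := ⟨Nat.mul_ne_zero (by omega) (by omega)⟩
  have hdom := isDominating_petersenDomSet h4 (Nat.odd_iff.mpr hkodd)
  have hcard := card_petersenDomSet h4
  exact ⟨hdom, hcard, hcard ▸ gamma_le_card hdom⟩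

theorem petersen_upper_c0mod4 (c k : ℕ) (hc : 3 ≤ c) (hk : 3 ≤ k) (hkodd : k % 2 = 1)
    (hc4 : c % 4 = 0) :
    IsDominating (petersen (c * k) k)
      ↑(((Finset.range (c * k / 4)).image fun i =>
          (Sum.inl ((4 * i : ℕ) : ZMod (c * k)) : ZMod (c * k) ⊕ ZMod (c * k))) ∪
        ((Finset.range (c * k / 4)).image fun i =>
          (Sum.inr ((4 * i + 2 : ℕ) : ZMod (c * k)) : ZMod (c * k) ⊕ ZMod (c * k)))) ∧
    (((Finset.range (c * k / 4)).image fun i =>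
          (Sum.inl ((4 * i : ℕ) : ZMod (c * k)) : ZMod (c * k) ⊕ ZMod (c * k))) ∪
        ((Finset.range (c * k / 4)).image fun i =>
          (Sum.inr ((4 * i + 2 : ℕ) : ZMod (c * k)) : ZMod (c * k) ⊕ ZMod (c * k)))).card
      = c * k / 2 ∧
    gamma (petersen (c * k) k) ≤ c * k / 2 :=
  petersen_upper_c0mod4_general c k hc hkodd hc4
end

section
/- Let S be a dominating set of P(6k,k) with k ≥ 4, and for 0 ≤ i ≤ k−1 let S_i = S ∩ ({v_{i+jk} : 0 ≤ j ≤ 5} ∪ {u_{i+jk} : 0 ≤ j ≤ 5}). Then |S_i| ≥ 2 for all i, and if |S_ℓ ∩ {u_{ℓ+jk} : 0 ≤ j ≤ 5}| = 1 for some ℓ, then |S_ℓ| ≥ 4. -/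
open SimpleGraph

/-- The `i`-th column of a vertex subset of P(6k,k). -/
def slice6 (k : ℕ) (S : Finset (ZMod (6 * k) ⊕ ZMod (6 * k))) (i : ℕ) :
    Set (ZMod (6 * k) ⊕ ZMod (6 * k)) :=
  {x | x ∈ S ∧ ∃ j ≤ 5, x = Sum.inl ((i + j * k : ℕ) : ZMod (6 * k)) ∨
        x = Sum.inr ((i + j * k : ℕ) : ZMod (6 * k))}

/-!
The closed neighbourhood of an inner vertex `u_{i+jk}` is
`{v_{i+jk}, u_{i+(j-1)k}, u_{i+jk}, u_{i+(j+1)k}}`, which lies in column `i`. So `S` meets each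
column in a set dominating all inner vertices of a 6-cycle with one pendant outer vertex per
inner vertex. Two inner vertices at distance 3 have disjoint closed neighbourhoods, giving two
vertices; if `u_{i+j₀k}` is the only inner vertex chosen, the inner vertices at `j₀ + 2`,
`j₀ + 3`, `j₀ + 4` can only be dominated by their outer neighbours, giving four.
-/

open Sum

/-- A column indexed by `ZMod 6`: `inl j` and `inr j` stand for `v_{i+jk}` and `u_{i+jk}`. -/
def DominatesInnerCycle (P : Set (ZMod 6 ⊕ ZMod 6)) : Prop :=
  ∀ j, inl j ∈ P ∨ inr (j - 1) ∈ P ∨ inr j ∈ P ∨ inr (j + 1) ∈ P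

namespace DominatesInnerCycle

variable {P : Set (ZMod 6 ⊕ ZMod 6)}

theorem two_le_ncard (hP : DominatesInnerCycle P) : 2 ≤ P.ncard := by
  refine (Set.one_lt_ncard_iff).2 ?_
  rcases hP 0 with h | h | h | h <;> rcases hP 3 with h' | h' | h' | h' <;>
    exact ⟨_, _, h, h', by decide⟩

theorem four_le_ncard (hP : DominatesInnerCycle P) (hinner : (inr ⁻¹' P).ncard = 1) :
    4 ≤ P.ncard := by
  obtain ⟨j₀, hj₀⟩ := Set.ncard_eq_one.1 hinner
  have mem_inr : ∀ j, inr j ∈ P ↔ j = j₀ := fun j => Set.ext_iff.1 hj₀ j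
  have away : ∀ j : ZMod 6, ∀ d ∈ ({2, 3, 4} : Finset (ZMod 6)),
      j + d - 1 ≠ j ∧ j + d ≠ j ∧ j + d + 1 ≠ j := by decide
  have mem_inl : ∀ d ∈ ({2, 3, 4} : Finset (ZMod 6)), inl (j₀ + d) ∈ P := by
    intro d hd
    obtain ⟨h₁, h₂, h₃⟩ := away j₀ d hd
    simpa [mem_inr, h₁, h₂, h₃] using hP (j₀ + d)
  have hsub : (({inr j₀, inl (j₀ + 2), inl (j₀ + 3), inl (j₀ + 4)} :
      Finset (ZMod 6 ⊕ ZMod 6)) : Set _) ⊆ P := by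
    intro x hx
    simp only [Finset.coe_insert, Finset.coe_singleton, Set.mem_insert_iff,
      Set.mem_singleton_iff] at hx
    rcases hx with rfl | rfl | rfl | rfl
    · exact (mem_inr _).2 rfl
    all_goals exact mem_inl _ (by decide)
  have hcard : ∀ j : ZMod 6, ({inr j, inl (j + 2), inl (j + 3), inl (j + 4)} :
      Finset (ZMod 6 ⊕ ZMod 6)).card = 4 := by decide
  calc 4 = _ := (hcard j₀).symm
    _ = _ := (Set.ncard_coe_finset _).symm
    _ ≤ P.ncard := Set.ncard_le_ncard hsub

end DominatesInnerCycle

theorem IsDominating.petersen_inr {n k : ℕ} {S : Set (ZMod n ⊕ ZMod n)}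
    (hS : IsDominating (petersen n k) S) (x : ZMod n) :
    inl x ∈ S ∨ inr (x - k) ∈ S ∨ inr x ∈ S ∨ inr (x + k) ∈ S := by
  rcases hS (inr x) with h | ⟨w, hw, hadj⟩
  · exact Or.inr (Or.inr (Or.inl h))
  rcases w with y | y <;> simp only [petersen, fromRel_adj, or_false] at hadj
  · obtain ⟨-, rfl⟩ := hadj
    exact Or.inl hw
  · obtain ⟨-, rfl | rfl⟩ := hadj
    · exact Or.inr (Or.inl (by simpa using hw))
    · exact Or.inr (Or.inr (Or.inr hw))

theorem Set.ncard_inter_range_of_injective {α β : Type*} {f : α → β}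
    (hf : Function.Injective f) (s : Set β) : (s ∩ Set.range f).ncard = (f ⁻¹' s).ncard := by
  rw [← Set.image_preimage_eq_inter_range, Set.ncard_image_of_injective _ hf]

def column (k i : ℕ) (j : ZMod 6) : ZMod (6 * k) := ((i + j.val * k : ℕ) : ZMod (6 * k))

section column

variable {k i : ℕ}

theorem column_natCast {j : ℕ} (hj : j < 6) :
    column k i j = ((i + j * k : ℕ) : ZMod (6 * k)) := by
  rw [column, ZMod.val_natCast_of_lt hj]

theorem column_add_one (j : ZMod 6) : column k i (j + 1) = column k i j + k := by
  have hj := ZMod.val_lt j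
  rw [column, column, ZMod.val_add, ZMod.val_one_eq_one_mod]
  rcases Nat.lt_or_ge (j.val + 1) 6 with h | h
  · rw [Nat.one_mod, Nat.mod_eq_of_lt h]
    push_cast
    ring
  · have h6k : ((6 * k : ℕ) : ZMod (6 * k)) = 0 := ZMod.natCast_self _
    rw [show j.val = 5 by omega]
    push_cast at h6k ⊢
    linear_combination -h6k

theorem column_sub_one (j : ZMod 6) : column k i (j - 1) = column k i j - k := by
  rw [eq_sub_iff_add_eq, ← column_add_one, sub_add_cancel]

theorem column_injective (hi : i < k) : Function.Injective (column k i) := by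
  have : NeZero (6 * k) := ⟨by omega⟩
  intro a b hab
  have ha := ZMod.val_lt a
  have hb := ZMod.val_lt b
  have hval := congrArg ZMod.val hab
  rw [column, column, ZMod.val_cast_of_lt (by nlinarith),
    ZMod.val_cast_of_lt (by nlinarith)] at hval
  exact ZMod.val_injective _ (Nat.eq_of_mul_eq_mul_right (by omega : 0 < k) (by omega))

theorem dominatesInnerCycle_preimage {S : Set (ZMod (6 * k) ⊕ ZMod (6 * k))}
    (hS : IsDominating (petersen (6 * k) k) S) :
    DominatesInnerCycle (Sum.map (column k i) (column k i) ⁻¹' S) := by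
  intro j
  simpa [column_sub_one, column_add_one] using hS.petersen_inr (column k i j)

variable (S : Finset (ZMod (6 * k) ⊕ ZMod (6 * k)))

theorem slice6_eq : slice6 k S i = ↑S ∩ Set.range (Sum.map (column k i) (column k i)) := by
  ext x
  constructor
  · rintro ⟨hx, j, hj, rfl | rfl⟩
    · exact ⟨hx, inl j, by simp [column_natCast (i := i) (by omega : j < 6)]⟩
    · exact ⟨hx, inr j, by simp [column_natCast (i := i) (by omega : j < 6)]⟩
  · rintro ⟨hx, j | j, rfl⟩
    · exact ⟨hx, j.val, Nat.le_of_lt_succ (ZMod.val_lt j), Or.inl rfl⟩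
    · exact ⟨hx, j.val, Nat.le_of_lt_succ (ZMod.val_lt j), Or.inr rfl⟩

theorem sep_slice6_inr_eq :
    {x ∈ slice6 k S i | ∃ j ≤ 5, x = inr ((i + j * k : ℕ) : ZMod (6 * k))} =
      ↑S ∩ Set.range (inr ∘ column k i) := by
  ext x
  constructor
  · rintro ⟨⟨hx, -⟩, j, hj, rfl⟩
    exact ⟨hx, j, by simp [column_natCast (i := i) (by omega : j < 6)]⟩
  · rintro ⟨hx, j, rfl⟩
    have hj := Nat.le_of_lt_succ (ZMod.val_lt j)
    exact ⟨⟨hx, j.val, hj, Or.inr rfl⟩, j.val, hj, rfl⟩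

theorem ncard_slice6 (hi : i < k) :
    (slice6 k S i).ncard = (Sum.map (column k i) (column k i) ⁻¹' ↑S).ncard := by
  rw [slice6_eq, Set.ncard_inter_range_of_injective
    (Sum.map_injective.2 ⟨column_injective hi, column_injective hi⟩)]

theorem ncard_sep_slice6_inr (hi : i < k) :
    {x ∈ slice6 k S i | ∃ j ≤ 5, x = inr ((i + j * k : ℕ) : ZMod (6 * k))}.ncard =
      (inr ⁻¹' (Sum.map (column k i) (column k i) ⁻¹' ↑S)).ncard := by
  rw [sep_slice6_inr_eq, Set.ncard_inter_range_of_injective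
    (inr_injective.comp (column_injective hi))]
  rfl

end column

theorem slice6_lower_general (k : ℕ)
    (S : Finset (ZMod (6 * k) ⊕ ZMod (6 * k))) (hS : IsDominating (petersen (6 * k) k) ↑S) :
    (∀ i < k, 2 ≤ (slice6 k S i).ncard) ∧
    ∀ ℓ < k,
      ({x ∈ slice6 k S ℓ | ∃ j ≤ 5, x = Sum.inr ((ℓ + j * k : ℕ) : ZMod (6 * k))}).ncard = 1 →
      4 ≤ (slice6 k S ℓ).ncard := by
  refine ⟨fun i hi => ?_, fun ℓ hℓ hinner => ?_⟩
  · rw [ncard_slice6 S hi]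
    exact (dominatesInnerCycle_preimage hS).two_le_ncard
  · rw [ncard_sep_slice6_inr S hℓ] at hinner
    rw [ncard_slice6 S hℓ]
    exact (dominatesInnerCycle_preimage hS).four_le_ncard hinner

theorem slice6_lower (k : ℕ) (hk : 4 ≤ k)
    (S : Finset (ZMod (6 * k) ⊕ ZMod (6 * k))) (hS : IsDominating (petersen (6 * k) k) ↑S) :
    (∀ i < k, 2 ≤ (slice6 k S i).ncard) ∧
    ∀ ℓ < k,
      ({x ∈ slice6 k S ℓ | ∃ j ≤ 5, x = Sum.inr ((ℓ + j * k : ℕ) : ZMod (6 * k))}).ncard = 1 →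
      4 ≤ (slice6 k S ℓ).ncard :=
  slice6_lower_general k S hS
end
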